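/- arXiv:2303.08968 — 5 statements merged into one kernel-verified Lean document; each statement's English description precedes it below -/
import Mathlib

section
/- (Embedding result for mean–variance optimization.) Let (Ω, F, P) be a probability space, let A be a nonempty index set (the set of admissible strategies), and let (W_P)_{P∈A} be a family of square-integrable real-valued random variables (the terminal wealths). Fix ρ > 0. If P* ∈ A maximizes the mean–variance objective, i.e. E[W_{P*}] − ρ·Var(W_{P*}) ≥ E[W_P] − ρ·Var(W_P) for all P ∈ A, then P* also minimizes the quadratic-target objective with target γ̃ = 1/(2ρ) + E[W_{P*}]: namely, E[(W_{P*} − γ̃)²] ≤ E[(W_P − γ̃)²] for all P ∈ A. -/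
/-!
Writing `γ = 1/(2ρ) + E[W_{P*}]`, the bias–variance decomposition
`E[(W - γ)²] = Var(W) + (E[W] - γ)²` turns the gap between the quadratic-target objectives of
`P` and `P*` into
`(1/ρ) · (MV(P*) - MV(P)) + (E[W_P] - E[W_{P*}])²`, where `MV` is the mean–variance objective;
both terms are nonnegative when `P*` maximizes `MV`.
-/

open MeasureTheory

lemma integral_sub_const_sq {Ω : Type*} [MeasurableSpace Ω] {μ : Measure Ω}
    [IsProbabilityMeasure μ] {f : Ω → ℝ} (hf : MemLp f 2 μ) (c : ℝ) :
    ∫ ω, (f ω - c) ^ 2 ∂μ =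
      ((∫ ω, f ω ^ 2 ∂μ) - (∫ ω, f ω ∂μ) ^ 2) + ((∫ ω, f ω ∂μ) - c) ^ 2 := by
  have hf_sq : Integrable (fun ω ↦ f ω ^ 2) μ := hf.integrable_sq
  have hf_int : Integrable f μ := hf.integrable one_le_two
  calc ∫ ω, (f ω - c) ^ 2 ∂μ
      = ∫ ω, (f ω ^ 2 - 2 * c * f ω + c ^ 2) ∂μ := by congr 1; ext ω; ring
    _ = (∫ ω, f ω ^ 2 ∂μ) - 2 * c * (∫ ω, f ω ∂μ) + c ^ 2 := by
        have hf_lin : Integrable (fun ω ↦ f ω ^ 2 - 2 * c * f ω) μ :=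
          hf_sq.sub (hf_int.const_mul _)
        rw [integral_add hf_lin (integrable_const _),
          integral_sub hf_sq (hf_int.const_mul _), integral_const_mul, integral_const]
        simp
    _ = _ := by ring

lemma quadratic_target_sub_eq {ρ m v m' v' : ℝ} (hρ : ρ ≠ 0) :
    (v + (m - (1 / (2 * ρ) + m')) ^ 2) - (v' + (m' - (1 / (2 * ρ) + m')) ^ 2) =
      ((m' - ρ * v') - (m - ρ * v)) / ρ + (m - m') ^ 2 := by
  field_simp
  ring

lemma quadratic_target_le_of_mean_variance_le {ρ m v m' v' : ℝ} (hρ : 0 < ρ)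
    (h : m - ρ * v ≤ m' - ρ * v') :
    v' + (m' - (1 / (2 * ρ) + m')) ^ 2 ≤ v + (m - (1 / (2 * ρ) + m')) ^ 2 := by
  rw [← sub_nonneg, quadratic_target_sub_eq hρ.ne']
  have : 0 ≤ ((m' - ρ * v') - (m - ρ * v)) / ρ := div_nonneg (sub_nonneg.2 h) hρ.le
  positivity

theorem mean_variance_embedding_general
    {Ω : Type*} [MeasurableSpace Ω] (μ : Measure Ω) [IsProbabilityMeasure μ]
    {A : Type*} (W : A → Ω → ℝ)
    (hL2 : ∀ P : A, MemLp (W P) 2 μ)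
    (ρ : ℝ) (hρ : 0 < ρ) (Pstar : A)
    (hopt : ∀ P : A,
      (∫ ω, W P ω ∂μ) -
          ρ * ((∫ ω, (W P ω) ^ 2 ∂μ) - (∫ ω, W P ω ∂μ) ^ 2) ≤
        (∫ ω, W Pstar ω ∂μ) -
          ρ * ((∫ ω, (W Pstar ω) ^ 2 ∂μ) - (∫ ω, W Pstar ω ∂μ) ^ 2)) :
    ∀ P : A,
      (∫ ω, (W Pstar ω - (1 / (2 * ρ) + ∫ ω', W Pstar ω' ∂μ)) ^ 2 ∂μ) ≤
        ∫ ω, (W P ω - (1 / (2 * ρ) + ∫ ω', W Pstar ω' ∂μ)) ^ 2 ∂μ := by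
  intro P
  rw [integral_sub_const_sq (hL2 Pstar), integral_sub_const_sq (hL2 P)]
  exact quadratic_target_le_of_mean_variance_le hρ (hopt P)

/-- **Embedding result for mean–variance optimization.** Let `(W_P)_{P ∈ A}` be a
family of square-integrable terminal wealths on a probability space, indexed by a
nonempty admissible set `A`, and fix `ρ > 0`. If `P*` maximizes the mean–variance
objective `E[W_P] − ρ·Var(W_P)` (with `Var(X) = E[X²] − (E[X])²`), then `P*` also
minimizes the quadratic-target objective `E[(W_P − γ̃)²]` with target
`γ̃ = 1/(2ρ) + E[W_{P*}]`. -/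
theorem mean_variance_embedding
    {Ω : Type*} [MeasurableSpace Ω] (μ : Measure Ω) [IsProbabilityMeasure μ]
    {A : Type*} [Nonempty A] (W : A → Ω → ℝ)
    (hmeas : ∀ P : A, Measurable (W P))
    (hL2 : ∀ P : A, MemLp (W P) 2 μ)
    (ρ : ℝ) (hρ : 0 < ρ) (Pstar : A)
    (hopt : ∀ P : A,
      (∫ ω, W P ω ∂μ) -
          ρ * ((∫ ω, (W P ω) ^ 2 ∂μ) - (∫ ω, W P ω ∂μ) ^ 2) ≤
        (∫ ω, W Pstar ω ∂μ) -
          ρ * ((∫ ω, (W Pstar ω) ^ 2 ∂μ) - (∫ ω, W Pstar ω ∂μ) ^ 2)) :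
    ∀ P : A,
      (∫ ω, (W Pstar ω - (1 / (2 * ρ) + ∫ ω', W Pstar ω' ∂μ)) ^ 2 ∂μ) ≤
        ∫ ω, (W P ω - (1 / (2 * ρ) + ∫ ω', W Pstar ω' ∂μ)) ^ 2 ∂μ :=
  mean_variance_embedding_general μ W hL2 ρ hρ Pstar hopt
end

section
/- (Convergence to the optimal wealth.) Let Z be the probability simplex in ℝ^{N_a} and D_φ = [0,T] × [0,w_max]. Let p* : D_φ → Z be continuous and let (f_n)_{n∈ℕ} be functions f_n : D_φ → Z such that sup_{φ∈D_φ} |f_{n,i}(φ) − p*_i(φ)| → 0 as n → ∞ for every i = 1,…,N_a. Let W(·;p*,Y) and W(·;f_n,Y) denote the wealth processes generated by the recursion with control p* and f_n respectively, and assume the bounded-wealth condition holds for p* and for every f_n. Then for every rebalancing time t_m (m = 0,…,N_rb−1), W(t_m^−;f_n,Y) → W(t_m^−;p*,Y) almost surely as n → ∞, and moreover the terminal wealths converge: W(T;f_n,Y) → W(T;p*,Y) almost surely. -/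
open MeasureTheory Filter Set

noncomputable section

/-- The wealth process: `wealthRec … m = W(t_m^−)`, with `W(t_0^−) = w₀`,
`W(t_m^+) = W(t_m^−) + q(t_m)` and
`W(t_{m+1}^−) = W(t_m^+) · ∑_i p_i(t_m, W(t_m^+)) · Y_i(t_m)`, where `t_m = m·Δt`. -/
def wealthRec (Na Nrb : ℕ) (dt w0 : ℝ) (q : ℕ → ℝ)
    (p : ℝ → ℝ → Fin Na → ℝ) (R : Fin Nrb → Fin Na → ℝ) : ℕ → ℝ
  | 0 => w0
  | m + 1 =>
      let W := wealthRec Na Nrb dt w0 q p R m + q m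
      W * ∑ i, p ((m : ℝ) * dt) W i * (if hm : m < Nrb then R ⟨m, hm⟩ i else 1)

/-- Bounded-wealth condition along a single return path: all the quantities
`W(t_m^−)` (`m ≤ N_rb`, including the terminal wealth) and `W(t_m^+)`
(`m < N_rb`) lie in `[0, w_max]`. -/
def BoundedWealthPath (Na Nrb : ℕ) (dt w0 wmax : ℝ) (q : ℕ → ℝ)
    (p : ℝ → ℝ → Fin Na → ℝ) (R : Fin Nrb → Fin Na → ℝ) : Prop :=
  (∀ m ≤ Nrb, wealthRec Na Nrb dt w0 q p R m ∈ Set.Icc 0 wmax) ∧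
  (∀ m < Nrb, wealthRec Na Nrb dt w0 q p R m + q m ∈ Set.Icc 0 wmax)

/-! The wealth `W(t_{m+1}^−)` is a continuous function of `W(t_m^+)` and of the weights
`p(t_m, W(t_m^+))`. When the controls converge uniformly to a continuous limit, the weights
evaluated along a convergent sequence of wealths converge to the limit weights, so the
convergence of `W(t_m^−)` propagates by induction on `m`, path by path. -/

lemma tendstoUniformlyOn_atTop_iff_abs_sub_lt {α : Type*} {F : ℕ → α → ℝ} {f : α → ℝ}
    {s : Set α} :
    TendstoUniformlyOn F f atTop s ↔ ∀ ε > 0, ∃ N, ∀ n ≥ N, ∀ x ∈ s, |F n x - f x| < ε := by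
  simp only [Metric.tendstoUniformlyOn_iff, eventually_atTop, Real.dist_eq, abs_sub_comm]

lemma natCast_mul_div_mem_Icc {T : ℝ} (hT : 0 ≤ T) {m N : ℕ} (hm : m ≤ N) :
    (m : ℝ) * (T / N) ∈ Icc 0 T := by
  refine ⟨by positivity, ?_⟩
  calc (m : ℝ) * (T / N) = (m / N) * T := by ring
    _ ≤ 1 * T := by gcongr; exact div_le_one_of_le₀ (by exact_mod_cast hm) (by positivity)
    _ = T := one_mul T

lemma wealthRec_succ_of_lt {Na Nrb : ℕ} {dt w0 : ℝ} {q : ℕ → ℝ} {p : ℝ → ℝ → Fin Na → ℝ}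
    {R : Fin Nrb → Fin Na → ℝ} {m : ℕ} (hm : m < Nrb) :
    wealthRec Na Nrb dt w0 q p R (m + 1) =
      (wealthRec Na Nrb dt w0 q p R m + q m) *
        ∑ i, p (m * dt) (wealthRec Na Nrb dt w0 q p R m + q m) i * R ⟨m, hm⟩ i := by
  simp [wealthRec, hm]

theorem tendsto_wealthRec_of_tendstoUniformlyOn {Na Nrb : ℕ} {T wmax dt w0 : ℝ}
    {q : ℕ → ℝ} {R : Fin Nrb → Fin Na → ℝ} {pstar : ℝ → ℝ → Fin Na → ℝ}
    {f : ℕ → ℝ → ℝ → Fin Na → ℝ}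
    (hdt : ∀ m < Nrb, (m : ℝ) * dt ∈ Icc 0 T)
    (hpcont : ContinuousOn (fun φ : ℝ × ℝ => pstar φ.1 φ.2) (Icc 0 T ×ˢ Icc 0 wmax))
    (hunif : ∀ i, TendstoUniformlyOn (fun n (φ : ℝ × ℝ) => f n φ.1 φ.2 i)
      (fun φ => pstar φ.1 φ.2 i) atTop (Icc 0 T ×ˢ Icc 0 wmax))
    (hstar : BoundedWealthPath Na Nrb dt w0 wmax q pstar R)
    (hf : ∀ n, BoundedWealthPath Na Nrb dt w0 wmax q (f n) R) :
    ∀ m ≤ Nrb, Tendsto (fun n => wealthRec Na Nrb dt w0 q (f n) R m) atTop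
      (nhds (wealthRec Na Nrb dt w0 q pstar R m)) := by
  intro m
  induction m with
  | zero => exact fun _ => tendsto_const_nhds
  | succ m ih =>
    intro (hm : m < Nrb)
    simp only [wealthRec_succ_of_lt hm]
    set t : ℝ := m * dt
    have hWplus : Tendsto (fun n => wealthRec Na Nrb dt w0 q (f n) R m + q m) atTop
        (nhds (wealthRec Na Nrb dt w0 q pstar R m + q m)) :=
      (ih hm.le).add_const (q m)
    have hstate : Tendsto (fun n => (t, wealthRec Na Nrb dt w0 q (f n) R m + q m)) atTop
        (nhdsWithin (t, wealthRec Na Nrb dt w0 q pstar R m + q m)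
          (Icc 0 T ×ˢ Icc 0 wmax)) :=
      tendsto_nhdsWithin_iff.mpr
        ⟨tendsto_const_nhds.prodMk_nhds hWplus,
          Eventually.of_forall fun n => ⟨hdt m hm, (hf n).2 m hm⟩⟩
    have hweights : ∀ i, Tendsto
        (fun n => f n t (wealthRec Na Nrb dt w0 q (f n) R m + q m) i) atTop
        (nhds (pstar t (wealthRec Na Nrb dt w0 q pstar R m + q m) i)) := fun i =>
      (hunif i).tendsto_comp
        (((continuous_apply i).comp_continuousOn hpcont) _ ⟨hdt m hm, hstar.2 m hm⟩) hstate
    exact hWplus.mul (tendsto_finsetSum _ fun i _ => (hweights i).mul_const _)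

theorem wealth_converges_to_optimal_wealth_general
    {Ω : Type*} [MeasurableSpace Ω] (μ : Measure Ω)
    (Na Nrb : ℕ)
    (T wmax w0 : ℝ) (hT : 0 < T)
    (q : ℕ → ℝ)
    (Y : Ω → Fin Nrb → Fin Na → ℝ)
    (pstar : ℝ → ℝ → Fin Na → ℝ)
    (hpcont : ContinuousOn (fun φ : ℝ × ℝ => pstar φ.1 φ.2)
      (Set.Icc 0 T ×ˢ Set.Icc 0 wmax))
    (f : ℕ → ℝ → ℝ → Fin Na → ℝ)
    (hunif : ∀ i : Fin Na, ∀ ε > 0, ∃ N : ℕ, ∀ n ≥ N,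
      ∀ φ ∈ Set.Icc (0 : ℝ) T ×ˢ Set.Icc (0 : ℝ) wmax,
        |f n φ.1 φ.2 i - pstar φ.1 φ.2 i| < ε)
    (hbddstar : ∀ᵐ ω ∂μ, BoundedWealthPath Na Nrb (T / Nrb) w0 wmax q pstar (Y ω))
    (hbddf : ∀ n, ∀ᵐ ω ∂μ, BoundedWealthPath Na Nrb (T / Nrb) w0 wmax q (f n) (Y ω)) :
    ∀ᵐ ω ∂μ, ∀ m ≤ Nrb,
      Tendsto (fun n : ℕ => wealthRec Na Nrb (T / Nrb) w0 q (f n) (Y ω) m)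
        atTop (nhds (wealthRec Na Nrb (T / Nrb) w0 q pstar (Y ω) m)) := by
  filter_upwards [hbddstar, ae_all_iff.mpr hbddf] with ω hstar hf
  exact tendsto_wealthRec_of_tendstoUniformlyOn
    (fun m hm => natCast_mul_div_mem_Icc hT.le hm.le) hpcont
    (fun i => tendstoUniformlyOn_atTop_iff_abs_sub_lt.mpr (hunif i)) hstar hf

/-- **Convergence to the optimal wealth.** If the controls `f_n : D_φ → Z` converge
uniformly on `D_φ = [0,T] × [0,w_max]` to the continuous control `p* : D_φ → Z`, and
the bounded-wealth condition holds (a.s.) for `p*` and every `f_n`, then for every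
rebalancing time `t_m` the wealths `W(t_m^−; f_n, Y)` converge almost surely to
`W(t_m^−; p*, Y)`, and the terminal wealths `W(T; f_n, Y)` converge almost surely to
`W(T; p*, Y)` (the case `m = N_rb` below). -/
theorem wealth_converges_to_optimal_wealth
    {Ω : Type*} [MeasurableSpace Ω] (μ : Measure Ω) [IsProbabilityMeasure μ]
    (Na Nrb : ℕ) (hNa : 1 ≤ Na) (hNrb : 1 ≤ Nrb)
    (T wmax w0 : ℝ) (hT : 0 < T) (hwmax : 0 < wmax) (hw0 : 0 < w0)
    (q : ℕ → ℝ)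
    (Y : Ω → Fin Nrb → Fin Na → ℝ) (hYmeas : Measurable Y)
    (hYnonneg : ∀ ω m i, 0 ≤ Y ω m i)
    (hYint : ∀ m i, Integrable (fun ω => Y ω m i) μ)
    (pstar : ℝ → ℝ → Fin Na → ℝ)
    (hpcont : ContinuousOn (fun φ : ℝ × ℝ => pstar φ.1 φ.2)
      (Set.Icc 0 T ×ˢ Set.Icc 0 wmax))
    (hpZ : ∀ φ ∈ Set.Icc (0 : ℝ) T ×ˢ Set.Icc (0 : ℝ) wmax,
      pstar φ.1 φ.2 ∈ stdSimplex ℝ (Fin Na))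
    (f : ℕ → ℝ → ℝ → Fin Na → ℝ)
    (hfZ : ∀ n, ∀ φ ∈ Set.Icc (0 : ℝ) T ×ˢ Set.Icc (0 : ℝ) wmax,
      f n φ.1 φ.2 ∈ stdSimplex ℝ (Fin Na))
    (hunif : ∀ i : Fin Na, ∀ ε > 0, ∃ N : ℕ, ∀ n ≥ N,
      ∀ φ ∈ Set.Icc (0 : ℝ) T ×ˢ Set.Icc (0 : ℝ) wmax,
        |f n φ.1 φ.2 i - pstar φ.1 φ.2 i| < ε)
    (hbddstar : ∀ᵐ ω ∂μ, BoundedWealthPath Na Nrb (T / Nrb) w0 wmax q pstar (Y ω))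
    (hbddf : ∀ n, ∀ᵐ ω ∂μ, BoundedWealthPath Na Nrb (T / Nrb) w0 wmax q (f n) (Y ω)) :
    ∀ᵐ ω ∂μ, ∀ m ≤ Nrb,
      Tendsto (fun n : ℕ => wealthRec Na Nrb (T / Nrb) w0 q (f n) (Y ω) m)
        atTop (nhds (wealthRec Na Nrb (T / Nrb) w0 q pstar (Y ω) m)) :=
  wealth_converges_to_optimal_wealth_general μ Na Nrb T wmax w0 hT q Y pstar hpcont f hunif hbddstar
    hbddf

end
end

section
/- (Convergence of the G-term in probability with the empirical mean plugged in.) Fix w_0 > 0 and w_max > 0, and let G : ℝ⁴ → ℝ be continuous and uniformly equicontinuous in its second argument on the relevant compact range: for every ε > 0 there exists δ > 0 such that |G(x,a,w_0,ξ) − G(x,b,w_0,ξ)| < ε whenever x, a, b ∈ [0,w_max], ξ ∈ ℝ and |a − b| < δ. For each n let Θ_n be a nonempty set and let W^{(1)}_n(θ),…,W^{(n)}_n(θ), θ ∈ Θ_n, be [0,w_max]-valued random variables on a common probability space such that, for each θ, the W^{(j)}_n(θ) (j = 1,…,n) are identically distributed with common mean m_n(θ). Assume: (H1) sup_{θ∈Θ_n}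 |(1/n)∑_{j=1}^n W^{(j)}_n(θ) − m_n(θ)| → 0 in probability; and (H2) sup_{(θ,ξ)∈Θ_n×ℝ} |(1/n)∑_{j=1}^n G(W^{(j)}_n(θ), m_n(θ), w_0, ξ) − E[G(W^{(1)}_n(θ), m_n(θ), w_0, ξ)]| → 0 in probability. Then sup_{(θ,ξ)∈Θ_n×ℝ} |(1/n)∑_{j=1}^n G(W^{(j)}_n(θ), (1/n)∑_{k=1}^n W^{(k)}_n(θ), w_0, ξ) − E[G(W^{(1)}_n(θ), m_n(θ), w_0, ξ)]| → 0 in probability as n → ∞. -/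
/-!
Replacing the empirical mean by the true mean `m_n(θ)` inside `G` costs at most `ε/2` as soon
as the two are `δ`-close, by equicontinuity of `G` in its second argument. Hence the event
`sup |…| > ε` lies in the union of the event of (H1) at level `δ/2` and that of (H2) at level
`ε/2`, both of whose probabilities tend to `0`.
-/

open MeasureTheory Filter Finset

theorem integral_mem_Icc_of_forall_mem_Icc {Ω : Type*} [MeasurableSpace Ω] {μ : Measure Ω}
    [IsProbabilityMeasure μ] {f : Ω → ℝ} {b : ℝ} (hf : ∀ ω, f ω ∈ Set.Icc 0 b) :
    ∫ ω, f ω ∂μ ∈ Set.Icc 0 b := by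
  refine ⟨integral_nonneg fun ω => (hf ω).1, ?_⟩
  have hnorm : ∀ᵐ ω ∂μ, ‖f ω‖ ≤ b := Eventually.of_forall fun ω => by
    rw [Real.norm_of_nonneg (hf ω).1]
    exact (hf ω).2
  simpa using (le_abs_self _).trans (norm_integral_le_of_norm_le_const hnorm)

theorem sum_range_div_mem_Icc {x : ℕ → ℝ} {b : ℝ} {n : ℕ} (hb : 0 ≤ b)
    (hx : ∀ j ∈ range n, x j ∈ Set.Icc 0 b) :
    (∑ j ∈ range n, x j) / n ∈ Set.Icc 0 b := by
  rcases n.eq_zero_or_pos with rfl | hn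
  · simp [hb]
  refine ⟨div_nonneg (sum_nonneg fun j hj => (hx j hj).1) n.cast_nonneg, ?_⟩
  rw [div_le_iff₀ (by positivity)]
  calc ∑ j ∈ range n, x j ≤ ∑ _j ∈ range n, b := sum_le_sum fun j hj => (hx j hj).2
    _ = b * n := by simp [mul_comm]

theorem abs_sum_range_div_sub_sum_range_div_le {f g : ℕ → ℝ} {n : ℕ} {c : ℝ}
    (hc : 0 ≤ c) (h : ∀ j ∈ range n, |f j - g j| ≤ c) :
    |(∑ j ∈ range n, f j) / n - (∑ j ∈ range n, g j) / n| ≤ c := by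
  rw [div_sub_div_same, ← sum_sub_distrib, abs_div, Nat.abs_cast]
  rcases n.eq_zero_or_pos with rfl | hn
  · simp [hc]
  rw [div_le_iff₀ (by positivity)]
  calc |∑ j ∈ range n, (f j - g j)| ≤ ∑ j ∈ range n, |f j - g j| := abs_sum_le_sum_abs _ _
    _ ≤ ∑ _j ∈ range n, c := sum_le_sum h
    _ = c * n := by simp [mul_comm]

theorem tendsto_measure_zero_of_subset_union {α ι : Type*} [MeasurableSpace α] {μ : Measure α}
    {l : Filter ι} {A B C : ι → Set α} (hB : Tendsto (fun i => μ (B i)) l (nhds 0))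
    (hC : Tendsto (fun i => μ (C i)) l (nhds 0)) (hA : ∀ i, A i ⊆ B i ∪ C i) :
    Tendsto (fun i => μ (A i)) l (nhds 0) :=
  tendsto_of_tendsto_of_tendsto_of_le_of_le tendsto_const_nhds (by simpa using hB.add hC)
    (fun _ => zero_le) fun i => (measure_mono (hA i)).trans (measure_union_le _ _)

theorem G_term_convergence_in_probability_general
    {Ω : Type*} [MeasurableSpace Ω] (μ : Measure Ω) [IsProbabilityMeasure μ]
    (w0 wmax : ℝ)
    (G : ℝ → ℝ → ℝ → ℝ → ℝ)
    (hGequi : ∀ ε > 0, ∃ δ > 0, ∀ x ∈ Set.Icc (0 : ℝ) wmax,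
      ∀ a ∈ Set.Icc (0 : ℝ) wmax, ∀ b ∈ Set.Icc (0 : ℝ) wmax, ∀ ξ : ℝ,
        |a - b| < δ → |G x a w0 ξ - G x b w0 ξ| < ε)
    (Θ : ℕ → Type*)
    (W : (n : ℕ) → Θ n → ℕ → Ω → ℝ)
    (hWbdd : ∀ n (θ : Θ n) (j : ℕ) (ω : Ω), W n θ j ω ∈ Set.Icc 0 wmax)
    (mn : (n : ℕ) → Θ n → ℝ)
    (hmean : ∀ n (θ : Θ n) (j : ℕ), (∫ ω, W n θ j ω ∂μ) = mn n θ)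
    (H1 : ∀ ε > 0, Tendsto (fun n : ℕ => μ {ω | ∃ θ : Θ n,
        ε < |(∑ j ∈ Finset.range n, W n θ j ω) / n - mn n θ|}) atTop (nhds 0))
    (H2 : ∀ ε > 0, Tendsto (fun n : ℕ => μ {ω | ∃ θ : Θ n, ∃ ξ : ℝ,
        ε < |(∑ j ∈ Finset.range n, G (W n θ j ω) (mn n θ) w0 ξ) / n -
          ∫ ω', G (W n θ 0 ω') (mn n θ) w0 ξ ∂μ|}) atTop (nhds 0)) :
    ∀ ε > 0, Tendsto (fun n : ℕ => μ {ω | ∃ θ : Θ n, ∃ ξ : ℝ,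
        ε < |(∑ j ∈ Finset.range n,
              G (W n θ j ω) ((∑ k ∈ Finset.range n, W n θ k ω) / n) w0 ξ) / n -
          ∫ ω', G (W n θ 0 ω') (mn n θ) w0 ξ ∂μ|}) atTop (nhds 0) := by
  intro ε hε
  obtain ⟨δ, hδ, hG⟩ := hGequi (ε / 2) (half_pos hε)
  refine tendsto_measure_zero_of_subset_union (H1 (δ / 2) (half_pos hδ))
    (H2 (ε / 2) (half_pos hε)) fun n ω ⟨θ, ξ, hlarge⟩ => ?_
  by_contra hsmall
  simp only [Set.mem_union, Set.mem_ofPred_eq, not_or, not_exists, not_lt] at hsmall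
  obtain ⟨hmean_close, hG_close⟩ := hsmall
  have hm : mn n θ ∈ Set.Icc 0 wmax :=
    hmean n θ 0 ▸ integral_mem_Icc_of_forall_mem_Icc (hWbdd n θ 0)
  have hmbar := sum_range_div_mem_Icc (n := n) (hm.1.trans hm.2) fun j _ => hWbdd n θ j ω
  have hplug := abs_sum_range_div_sub_sum_range_div_le (n := n) (half_pos hε).le fun j _ =>
    (hG _ (hWbdd n θ j ω) _ hmbar _ hm ξ ((hmean_close θ).trans_lt (half_lt_self hδ))).le
  exact hlarge.not_ge <| ((abs_sub_le _ _ _).trans (add_le_add hplug (hG_close θ ξ))).trans_eq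
    (add_halves ε)

/-- **Convergence of the `G`-term in probability with the empirical mean plugged in.**
Under uniform equicontinuity of `G` in its second argument on `[0,w_max]`, a uniform
law of large numbers for the wealths (H1) and a uniform law of large numbers for the
`G`-term with the true mean plugged in (H2), the empirical `G`-term with the
empirical mean plugged in converges, uniformly in `(θ,ξ)`, to
`E[G(W⁽¹⁾_n(θ), m_n(θ), w₀, ξ)]` in probability.  Here convergence in probability of
`sup_{(θ,ξ)} |S_n(θ,ξ)|` to `0` is expressed as: for every `ε > 0`,
`μ {ω | ∃ θ ξ, ε < |S_n(θ,ξ)(ω)|} → 0`. -/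
theorem G_term_convergence_in_probability
    {Ω : Type*} [MeasurableSpace Ω] (μ : Measure Ω) [IsProbabilityMeasure μ]
    (w0 wmax : ℝ) (hw0 : 0 < w0) (hwmax : 0 < wmax)
    (G : ℝ → ℝ → ℝ → ℝ → ℝ)
    (hGcont : Continuous fun x : ℝ × ℝ × ℝ × ℝ => G x.1 x.2.1 x.2.2.1 x.2.2.2)
    (hGequi : ∀ ε > 0, ∃ δ > 0, ∀ x ∈ Set.Icc (0 : ℝ) wmax,
      ∀ a ∈ Set.Icc (0 : ℝ) wmax, ∀ b ∈ Set.Icc (0 : ℝ) wmax, ∀ ξ : ℝ,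
        |a - b| < δ → |G x a w0 ξ - G x b w0 ξ| < ε)
    (Θ : ℕ → Type*) (hΘ : ∀ n, Nonempty (Θ n))
    (W : (n : ℕ) → Θ n → ℕ → Ω → ℝ)
    (hWmeas : ∀ n (θ : Θ n) (j : ℕ), Measurable (W n θ j))
    (hWbdd : ∀ n (θ : Θ n) (j : ℕ) (ω : Ω), W n θ j ω ∈ Set.Icc 0 wmax)
    (mn : (n : ℕ) → Θ n → ℝ)
    (hident : ∀ n (θ : Θ n) (j k : ℕ),
      ProbabilityTheory.IdentDistrib (W n θ j) (W n θ k) μ μ)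
    (hmean : ∀ n (θ : Θ n) (j : ℕ), (∫ ω, W n θ j ω ∂μ) = mn n θ)
    (H1 : ∀ ε > 0, Tendsto (fun n : ℕ => μ {ω | ∃ θ : Θ n,
        ε < |(∑ j ∈ Finset.range n, W n θ j ω) / n - mn n θ|}) atTop (nhds 0))
    (H2 : ∀ ε > 0, Tendsto (fun n : ℕ => μ {ω | ∃ θ : Θ n, ∃ ξ : ℝ,
        ε < |(∑ j ∈ Finset.range n, G (W n θ j ω) (mn n θ) w0 ξ) / n -
          ∫ ω', G (W n θ 0 ω') (mn n θ) w0 ξ ∂μ|}) atTop (nhds 0)) :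
    ∀ ε > 0, Tendsto (fun n : ℕ => μ {ω | ∃ θ : Θ n, ∃ ξ : ℝ,
        ε < |(∑ j ∈ Finset.range n,
              G (W n θ j ω) ((∑ k ∈ Finset.range n, W n θ k ω) / n) w0 ξ) / n -
          ∫ ω', G (W n θ 0 ω') (mn n θ) w0 ξ ∂μ|}) atTop (nhds 0) :=
  G_term_convergence_in_probability_general μ w0 wmax G hGequi Θ W hWbdd mn hmean H1 H2
end

section
/- (Softmax is 1-Lipschitz.) For every m ≥ 1, the softmax function ψ : ℝ^m → ℝ^m is Lipschitz continuous with Lipschitz constant 1 with respect to the Euclidean norm: ‖ψ(x) − ψ(y)‖₂ ≤ ‖x − y‖₂ for all x, y ∈ ℝ^m. -/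
/-!
By the mean value inequality it suffices to bound the Jacobian `J = diag p - p pᵀ` of
softmax, where `p = ψ(y)` is a probability vector, by `1` in operator norm. With
`c = ⟨p, v⟩`, since `pᵢ² ≤ pᵢ ≤ 1`,
`‖J v‖² = ∑ pᵢ² (vᵢ - c)² ≤ ∑ pᵢ (vᵢ - c)² = ∑ pᵢ vᵢ² - c² ≤ ‖v‖²`.
-/

noncomputable section

/-- The softmax function `ψ : ℝ^m → ℝ^m`, `ψ_i(y) = exp(y_i) / ∑_j exp(y_j)`. -/
def softmax {m : ℕ} (y : Fin m → ℝ) : Fin m → ℝ :=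
  fun i => Real.exp (y i) / ∑ j, Real.exp (y j)

open Finset

section WeightedMean

variable {ι : Type*} [Fintype ι]

theorem sum_sq_mul_sub_weightedMean_le (p v : ι → ℝ) (hp : ∀ i, 0 ≤ p i)
    (hp_sum : ∑ i, p i = 1) :
    ∑ i, (p i * (v i - ∑ j, p j * v j)) ^ 2 ≤ ∑ i, v i ^ 2 := by
  have hp_le_one (i : ι) : p i ≤ 1 := hp_sum ▸ single_le_sum (fun j _ => hp j) (mem_univ i)
  set c := ∑ j, p j * v j
  have variance_eq : ∑ i, p i * (v i - c) ^ 2 = ∑ i, p i * v i ^ 2 - c ^ 2 := by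
    simp only [sub_sq, mul_add, mul_sub, sum_add_distrib, sum_sub_distrib]
    have cross : ∑ i, p i * (2 * v i * c) = 2 * c * c :=
      calc ∑ i, p i * (2 * v i * c) = ∑ i, 2 * c * (p i * v i) :=
            sum_congr rfl fun i _ => by ring
        _ = 2 * c * c := (mul_sum ..).symm
    rw [cross, ← sum_mul, hp_sum]
    ring
  calc ∑ i, (p i * (v i - c)) ^ 2
      ≤ ∑ i, p i * (v i - c) ^ 2 := by
        gcongr with i
        rw [mul_pow]
        exact mul_le_mul_of_nonneg_right (pow_le_of_le_one (hp i) (hp_le_one i) two_ne_zero)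
          (sq_nonneg _)
    _ ≤ ∑ i, p i * v i ^ 2 := by rw [variance_eq]; linarith [sq_nonneg c]
    _ ≤ ∑ i, v i ^ 2 := by
        gcongr with i
        exact mul_le_of_le_one_left (sq_nonneg _) (hp_le_one i)

end WeightedMean

section Softmax

variable {m : ℕ}

theorem sum_exp_pos [NeZero m] (y : Fin m → ℝ) : 0 < ∑ j, Real.exp (y j) :=
  sum_pos (fun j _ => Real.exp_pos (y j)) univ_nonempty

theorem softmax_nonneg [NeZero m] (y : Fin m → ℝ) (i : Fin m) : 0 ≤ softmax y i :=
  div_nonneg (Real.exp_pos _).le (sum_exp_pos y).le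

theorem sum_softmax [NeZero m] (y : Fin m → ℝ) : ∑ i, softmax y i = 1 := by
  unfold softmax
  rw [← sum_div, div_self (sum_exp_pos y).ne']

def softmaxFDeriv (y : Fin m → ℝ) : (Fin m → ℝ) →L[ℝ] (Fin m → ℝ) :=
  .pi fun i => softmax y i • (.proj i - ∑ j, softmax y j • .proj j)

theorem softmaxFDeriv_apply (y v : Fin m → ℝ) (i : Fin m) :
    softmaxFDeriv y v i = softmax y i * (v i - ∑ j, softmax y j * v j) := by
  simp [softmaxFDeriv]

theorem hasFDerivAt_softmax [NeZero m] (y : Fin m → ℝ) :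
    HasFDerivAt softmax (softmaxFDeriv y) y := by
  have hS : ∑ j, Real.exp (y j) ≠ 0 := (sum_exp_pos y).ne'
  have hexp (i : Fin m) : HasFDerivAt (fun x : Fin m → ℝ => Real.exp (x i))
      (Real.exp (y i) • ContinuousLinearMap.proj i) y :=
    (hasFDerivAt_apply i y).exp
  have hinv : HasFDerivAt (fun x : Fin m → ℝ => (∑ j, Real.exp (x j))⁻¹)
      (-((∑ j, Real.exp (y j)) ^ 2)⁻¹ • ∑ j, Real.exp (y j) • ContinuousLinearMap.proj j) y :=
    (hasDerivAt_inv hS).comp_hasFDerivAt y (.fun_sum fun j _ => hexp j)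
  refine hasFDerivAt_pi.2 fun i => ((hexp i).mul hinv).congr_fderiv ?_
  ext v
  simp only [softmax, add_apply, smul_apply, sub_apply,
    _root_.sum_apply, ContinuousLinearMap.proj_apply, smul_eq_mul, div_mul_eq_mul_div, ← sum_div]
  field_simp
  ring

theorem norm_toLp_softmaxFDeriv_le [NeZero m] (y : Fin m → ℝ) (v : EuclideanSpace ℝ (Fin m)) :
    ‖WithLp.toLp 2 (softmaxFDeriv y v.ofLp)‖ ≤ ‖v‖ := by
  simp only [EuclideanSpace.norm_eq, Real.norm_eq_abs, sq_abs, softmaxFDeriv_apply]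
  exact Real.sqrt_le_sqrt (sum_sq_mul_sub_weightedMean_le _ _ (softmax_nonneg y) (sum_softmax y))

end Softmax

/-- **Softmax is 1-Lipschitz** with respect to the Euclidean norm on `ℝ^m`:
`‖ψ(x) − ψ(y)‖₂ ≤ ‖x − y‖₂` for all `x, y ∈ ℝ^m`. -/
theorem softmax_lipschitzWith_one (m : ℕ) (hm : 1 ≤ m) :
    LipschitzWith 1 (fun y : EuclideanSpace ℝ (Fin m) =>
      ((WithLp.equiv 2 (Fin m → ℝ)).symm
        (softmax ((WithLp.equiv 2 (Fin m → ℝ)) y)) : EuclideanSpace ℝ (Fin m))) := by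
  have : NeZero m := ⟨by omega⟩
  let e := PiLp.continuousLinearEquiv 2 ℝ (fun _ : Fin m => ℝ)
  have hderiv (y : EuclideanSpace ℝ (Fin m)) : HasFDerivAt
      (fun y : EuclideanSpace ℝ (Fin m) => WithLp.toLp 2 (softmax y.ofLp))
      (e.symm.toContinuousLinearMap ∘L softmaxFDeriv y.ofLp ∘L e.toContinuousLinearMap) y :=
    (PiLp.hasFDerivAt_toLp 2 _).comp y
      ((hasFDerivAt_softmax _).comp y (PiLp.hasFDerivAt_ofLp 2 y))
  rw [← lipschitzOnWith_univ]
  refine convex_univ.lipschitzOnWith_of_nnnorm_hasFDerivWithin_le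
    (fun y _ => (hderiv y).hasFDerivWithinAt) fun y _ => ?_
  rw [← NNReal.coe_le_coe, coe_nnnorm, NNReal.coe_one]
  exact ContinuousLinearMap.opNorm_le_bound _ zero_le_one fun v => by
    rw [one_mul]
    exact norm_toLp_softmaxFDeriv_le y.ofLp v

end
end

section
/- (Uniform density is preserved under composition with a Lipschitz map possessing a continuous right inverse.) Let K be a compact topological space, m ≥ 1, Z ⊆ ℝ^m, and let ψ : ℝ^m → ℝ^m be Lipschitz continuous with ψ(ℝ^m) ⊆ Z. Suppose there is a continuous map r : Z → ℝ^m with ψ(r(z)) = z for all z ∈ Z. If S is a set of continuous functions K → ℝ^m that is uniformly dense in C(K,ℝ^m) (with respect to the supremum norm), then the set {ψ∘f : f ∈ S} is uniformly dense in C(K,Z) = {g : K → ℝ^m continuous with g(K) ⊆ Z}: for every continuous g : K → Z and every ε > 0 there exists f ∈ S with sup_{x∈K} ‖ψ(f(x)) − g(x)‖ < ε. -/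
/-- **Uniform density is preserved under composition with a Lipschitz map possessing a
continuous right inverse.** Let `K` be compact, `Z ⊆ ℝ^m`, and `ψ : ℝ^m → ℝ^m`
Lipschitz with `ψ(ℝ^m) ⊆ Z` and a continuous right inverse `r : Z → ℝ^m`
(`ψ(r z) = z` on `Z`). If `S` is a set of continuous functions `K → ℝ^m` uniformly
dense in `C(K,ℝ^m)`, then `{ψ ∘ f : f ∈ S}` is uniformly dense in `C(K,Z)`: for every
continuous `g : K → Z` and every `ε > 0` there is `f ∈ S` with
`sup_{x ∈ K} ‖ψ(f x) − g x‖ < ε`. -/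
theorem uniform_density_comp_lipschitz_right_inverse
    {K : Type*} [TopologicalSpace K] [CompactSpace K]
    (m : ℕ) (hm : 1 ≤ m) (Z : Set (Fin m → ℝ))
    (ψ : (Fin m → ℝ) → (Fin m → ℝ)) (Kψ : NNReal) (hψlip : LipschitzWith Kψ ψ)
    (hψrange : ∀ y : Fin m → ℝ, ψ y ∈ Z)
    (r : (Fin m → ℝ) → (Fin m → ℝ)) (hrcont : ContinuousOn r Z)
    (hrinv : ∀ z ∈ Z, ψ (r z) = z)
    (S : Set (K → (Fin m → ℝ))) (hScont : ∀ f ∈ S, Continuous f)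
    (hSdense : ∀ g : K → (Fin m → ℝ), Continuous g → ∀ ε > 0,
      ∃ f ∈ S, ∀ x : K, ‖f x - g x‖ < ε) :
    ∀ g : K → (Fin m → ℝ), Continuous g → (∀ x : K, g x ∈ Z) → ∀ ε > 0,
      ∃ f ∈ S, ∀ x : K, ‖ψ (f x) - g x‖ < ε := by
  intro g hg hgZ ε hε
  have hh : Continuous fun x => r (g x) := hrcont.comp_continuous hg hgZ
  have hδ : (0:ℝ) < ε / (Kψ + 1) := by positivity
  obtain ⟨f, hfS, hf⟩ := hSdense _ hh _ hδ
  refine ⟨f, hfS, fun x => ?_⟩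
  have h1 : ψ (r (g x)) = g x := hrinv _ (hgZ x)
  calc ‖ψ (f x) - g x‖ = ‖ψ (f x) - ψ (r (g x))‖ := by rw [h1]
    _ = dist (ψ (f x)) (ψ (r (g x))) := (dist_eq_norm _ _).symm
    _ ≤ Kψ * dist (f x) (r (g x)) := hψlip.dist_le_mul _ _
    _ ≤ (Kψ + 1) * dist (f x) (r (g x)) := by
        have := dist_nonneg (x := f x) (y := r (g x)); nlinarith
    _ < (Kψ + 1) * (ε / (Kψ + 1)) := by
        have hK : (0:ℝ) < Kψ + 1 := by positivity
        exact (mul_lt_mul_iff_right₀ hK).mpr (by rw [dist_eq_norm]; exact hf x)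
    _ = ε := by field_simp
end
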